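/- Let Π = (P, 𝓛) be a finite projective plane of order n with n ≥ 5. Then Π is magic over the group G = (ℤ/nℤ)³, i.e., there exists an injective line-invariant function v : P → (ℤ/nℤ)³. -/

import Mathlib

/-!
A function of the form `x ↦ ∑_{l ∋ x} T l` is line invariant over a group of exponent `n`: the
line `l` meets itself in `n + 1` points and every other line in one point, so every line sum
equals `∑ l, T l`. It remains to find an injective function of this form into `(ℤ/nℤ)³`.

Fix a triangle with vertices `O₀, O₁, O₂`, the side `sᵢ` opposite `Oᵢ` (indices mod 3). The
`n + 1` lines through `Oⱼ` are labelled by `ℤ/nℤ`, injectively except that the two sides through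
`Oⱼ` both get `0`. Coordinate `j` of `T` is this labelling on the lines through `Oⱼ`, plus `1` on
`sⱼ₊₁` and `-1` on `sⱼ`; at a point `x ≠ Oⱼ` it sums to the label of `Oⱼx` plus `[x ∈ sⱼ₊₁]`
minus `[x ∈ sⱼ]`. Off the sides all coordinates are nonzero, and coordinates `0` and `1`
determine the point. On the sides there is a coordinate `a` equal to `0` with coordinate `a + 1`
equal to `-1` (at the vertex `Oₐ₊₂`) or `1` (at the other points of `sₐ₊₂`, which are then
told apart by coordinate `a + 2`).
-/

open Configuration

/-- The sum of `v` over the points of the line `l`. -/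
noncomputable def lineSum {P L G : Type*} [Membership P L] [AddCommMonoid G]
    (v : P → G) (l : L) : G :=
  ∑ᶠ x ∈ {x : P | x ∈ l}, v x

/-- `v : P → G` is line invariant if its sum along every line of `L` is the same. -/
def LineInvariant (P L : Type*) {G : Type*} [Membership P L] [AddCommMonoid G]
    (v : P → G) : Prop :=
  ∀ l l' : L, lineSum v l = lineSum v l'

open Finset Configuration.ProjectivePlane

section MagicLabeling

variable {P L : Type*} [Membership P L] {G : Type*}

open Classical in
noncomputable def pencilSum [Fintype L] [AddCommMonoid G] (T : L → G) (x : P) : G :=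
  ∑ l with x ∈ l, T l

open Classical in
lemma lineSum_eq_sum [Fintype P] [AddCommMonoid G] (v : P → G) (l : L) :
    lineSum v l = ∑ x with x ∈ l, v x := by
  rw [lineSum, ← finsum_mem_coe_finset]
  simp

open Classical in
lemma card_filter_mem_and_mem [Fintype P] [HasPoints P L] {l m : L} (h : l ≠ m) :
    #{x : P | x ∈ l ∧ x ∈ m} = 1 := by
  obtain ⟨p, hp, hunique⟩ := HasPoints.existsUnique_point P L l m h
  exact card_eq_one.2 ⟨p, by ext x; simpa using ⟨hunique x, fun hx => hx ▸ hp⟩⟩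

open Classical in
lemma card_filter_mem [Fintype P] [Finite L] [ProjectivePlane P L] (l : L) :
    #{x : P | x ∈ l} = order P L + 1 := by
  rw [← pointCount_eq P l, pointCount, Nat.card_eq_fintype_card, Fintype.card_subtype]

lemma lineSum_pencilSum [Fintype P] [Fintype L] [ProjectivePlane P L] [AddCommMonoid G]
    (T : L → G) (l : L) : lineSum (pencilSum T) l = order P L • T l + ∑ m, T m := by
  classical
  have hcount : ∀ m, #{x : P | x ∈ l ∧ x ∈ m} • T m
      = (if m = l then order P L • T m else 0) + T m := by
    intro m
    by_cases hm : m = l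
    · simp [hm, card_filter_mem, succ_nsmul]
    · simp [hm, card_filter_mem_and_mem (Ne.symm hm)]
  calc lineSum (pencilSum T) l
      = ∑ m, #{x : P | x ∈ l ∧ x ∈ m} • T m := by
        rw [lineSum_eq_sum]
        unfold pencilSum
        rw [sum_comm' (t' := univ) (s' := fun m => {x : P | x ∈ l ∧ x ∈ m}) (by simp)]
        simp
    _ = order P L • T l + ∑ m, T m := by
        simp only [hcount, sum_add_distrib, sum_ite_eq', mem_univ, if_true]

lemma lineInvariant_pencilSum [Fintype P] [Fintype L] [ProjectivePlane P L] [AddCommMonoid G]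
    (hG : ∀ g : G, order P L • g = 0) (T : L → G) : LineInvariant P L (pencilSum T) :=
  fun l l' => by rw [lineSum_pencilSum, lineSum_pencilSum, hG, hG]

lemma pencilSum_apply [Fintype L] {ι : Type*} {G : ι → Type*} [∀ i, AddCommMonoid (G i)]
    (T : L → ∀ i, G i) (x : P) (i : ι) : pencilSum T x i = pencilSum (fun l => T l i) x := by
  simp [pencilSum]

lemma pencilSum_add [Fintype L] [AddCommMonoid G] (T T' : L → G) (x : P) :
    pencilSum (fun l => T l + T' l) x = pencilSum T x + pencilSum T' x :=
  sum_add_distrib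

lemma pencilSum_sub [Fintype L] [AddCommGroup G] (T T' : L → G) (x : P) :
    pencilSum (fun l => T l - T' l) x = pencilSum T x - pencilSum T' x :=
  sum_sub_distrib ..

open Classical in
lemma pencilSum_ite_eq [Fintype L] [AddCommMonoid G] (m : L) (g : G) (x : P) :
    pencilSum (fun l => if l = m then g else 0) x = if x ∈ m then g else 0 := by
  simp [pencilSum, sum_ite_eq']

open Classical in
lemma pencilSum_ite_mem [Fintype L] [Nondegenerate P L] [AddCommMonoid G] (t : L → G)
    {O x : P} {m : L} (hx : x ≠ O) (hxm : x ∈ m) (hOm : O ∈ m) :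
    pencilSum (fun l => if O ∈ l then t l else 0) x = t m := by
  have hpencil : ({l | x ∈ l ∧ O ∈ l} : Finset L) = {m} := by
    ext l
    simp only [mem_filter, mem_univ, true_and, mem_singleton]
    refine ⟨fun ⟨hxl, hOl⟩ => ?_, fun h => h ▸ ⟨hxm, hOm⟩⟩
    exact (Nondegenerate.eq_or_eq hxl hOl hxm hOm).resolve_left hx
  rw [pencilSum, ← sum_filter, filter_filter, hpencil, sum_singleton]

open Classical in
lemma card_pencil_ne [Finite P] [Fintype L] [ProjectivePlane P L] {O : P} {s : L} (hs : O ∈ s) :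
    Fintype.card {l : L // O ∈ l ∧ l ≠ s} = order P L := by
  have hpencil : ({l | O ∈ l ∧ l ≠ s} : Finset L) = ({l | O ∈ l} : Finset L).erase s := by
    ext l
    simp [and_comm]
  rw [Fintype.card_subtype, hpencil, card_erase_of_mem (by simpa), ← Fintype.card_subtype,
    ← Nat.card_eq_fintype_card, ← lineCount, lineCount_eq, Nat.add_sub_cancel]

lemma exists_injOn_pencil [Finite P] [Fintype L] [ProjectivePlane P L] [AddGroup G] [Fintype G]
    (hG : order P L ≤ Fintype.card G) {O : P} {s s' : L} (hs : O ∈ s) (hs' : O ∈ s')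
    (hss' : s ≠ s') : ∃ t : L → G, t s = 0 ∧ t s' = 0 ∧ Set.InjOn t {l | O ∈ l ∧ l ≠ s'} := by
  classical
  obtain ⟨f⟩ := Function.Embedding.nonempty_of_card_le (α := {l : L // O ∈ l ∧ l ≠ s'})
    ((card_pencil_ne hs').trans_le hG)
  let g : L → G := fun l => if h : O ∈ l ∧ l ≠ s' then f ⟨l, h⟩ else f ⟨s, hs, hss'⟩
  refine ⟨fun l => g l - g s, sub_self _, by simp [g, hs, hss'], ?_⟩
  intro l (hl : O ∈ l ∧ l ≠ s') l' (hl' : O ∈ l' ∧ l' ≠ s') h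
  have hg : g l = g l' := sub_left_injective h
  simp only [g, dif_pos hl, dif_pos hl'] at hg
  exact congrArg Subtype.val (f.injective hg)

lemma eq_of_apply_eq_zero_of_apply_add_one_ne_zero {M : Type*} [Zero M] {u : Fin 3 → M}
    {a b : Fin 3} (ha : u a = 0) (hb : u b = 0) (ha' : u (a + 1) ≠ 0) (hb' : u (b + 1) ≠ 0) :
    a = b := by
  fin_cases a <;> fin_cases b <;> simp_all

structure Triangle (P L : Type*) [Membership P L] where
  vertex : Fin 3 → P
  side : Fin 3 → L
  vertex_mem_side_iff : ∀ i j, vertex j ∈ side i ↔ j ≠ i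

namespace Triangle

variable (Δ : Triangle P L)

lemma vertex_mem_side {i j : Fin 3} (h : j ≠ i) : Δ.vertex j ∈ Δ.side i :=
  (Δ.vertex_mem_side_iff i j).2 h

lemma vertex_notMem_side (i : Fin 3) : Δ.vertex i ∉ Δ.side i :=
  fun h => (Δ.vertex_mem_side_iff i i).1 h rfl

lemma side_ne_side {i j : Fin 3} (h : i ≠ j) : Δ.side i ≠ Δ.side j :=
  fun e => Δ.vertex_notMem_side i (e ▸ Δ.vertex_mem_side h)

lemma vertex_ne_vertex {i j : Fin 3} (h : i ≠ j) : Δ.vertex i ≠ Δ.vertex j :=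
  fun e => Δ.vertex_notMem_side i (e ▸ Δ.vertex_mem_side (i := i) (Ne.symm h))

lemma ne_vertex_of_mem_side {x : P} {i : Fin 3} (hx : x ∈ Δ.side i) : x ≠ Δ.vertex i :=
  fun e => Δ.vertex_notMem_side i (e ▸ hx)

lemma ne_vertex_of_notMem_side {x : P} {i j : Fin 3} (hx : x ∉ Δ.side i) (h : j ≠ i) :
    x ≠ Δ.vertex j :=
  fun e => hx (e ▸ Δ.vertex_mem_side h)

lemma eq_vertex_of_mem_side [Nondegenerate P L] {x : P} {i j k : Fin 3} (hi : x ∈ Δ.side i)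
    (hj : x ∈ Δ.side j) (hij : i ≠ j) (hki : k ≠ i) (hkj : k ≠ j) : x = Δ.vertex k :=
  (Nondegenerate.eq_or_eq hi (Δ.vertex_mem_side hki) hj (Δ.vertex_mem_side hkj)).resolve_right
    (Δ.side_ne_side hij)

def OnlyOnSide (i : Fin 3) (x : P) : Prop :=
  x ∈ Δ.side i ∧ x ∉ Δ.side (i + 1) ∧ x ∉ Δ.side (i + 2)

lemma eq_vertex_or_onlyOnSide [Nondegenerate P L] {x : P} (hx : ∃ i, x ∈ Δ.side i) :
    (∃ k, x = Δ.vertex k) ∨ ∃ i, Δ.OnlyOnSide i x := by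
  obtain ⟨i, hi⟩ := hx
  by_cases h₁ : x ∈ Δ.side (i + 1)
  · exact .inl ⟨i + 2, Δ.eq_vertex_of_mem_side hi h₁ (by omega) (by omega) (by omega)⟩
  by_cases h₂ : x ∈ Δ.side (i + 2)
  · exact .inl ⟨i + 1, Δ.eq_vertex_of_mem_side hi h₂ (by omega) (by omega) (by omega)⟩
  exact .inr ⟨i, hi, h₁, h₂⟩

lemma nonempty [ProjectivePlane P L] : Nonempty (Triangle P L) := by
  obtain ⟨p₁, p₂, p₃, -, l, l', h₁, -, -, h₂, h₂', -, h₃, h₃'⟩ := @exists_config P L _ _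
  have h₁₂ : p₁ ≠ p₂ := fun h => h₁ (h ▸ h₂)
  have h₁₃ : p₁ ≠ p₃ := fun h => h₁ (h ▸ h₃)
  have h₂₃ : p₂ ≠ p₃ := fun h => h₃' (h ▸ h₂')
  have hcollinear : ∀ m : L, p₁ ∈ m → p₂ ∈ m → p₃ ∈ m → False := fun m hm₁ hm₂ hm₃ =>
    h₁ ((Nondegenerate.eq_or_eq hm₂ hm₃ h₂ h₃).resolve_left h₂₃ ▸ hm₁)
  have hm₁₃ := HasLines.mkLine_ax (L := L) h₁₃
  have hm₁₂ := HasLines.mkLine_ax (L := L) h₁₂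
  refine ⟨⟨![p₁, p₂, p₃], ![l, HasLines.mkLine h₁₃, HasLines.mkLine h₁₂], fun i j => ?_⟩⟩
  fin_cases i <;> fin_cases j <;> simp_all
  exact fun h => hcollinear _ hm₁₃.1 h hm₁₃.2

structure Labeling (G : Type*) [Zero G] where
  label : Fin 3 → L → G
  label_side_add_one : ∀ j, label j (Δ.side (j + 1)) = 0
  label_side_add_two : ∀ j, label j (Δ.side (j + 2)) = 0
  injOn_label : ∀ j, Set.InjOn (label j) {l | Δ.vertex j ∈ l ∧ l ≠ Δ.side (j + 2)}

lemma nonempty_labeling [Finite P] [Fintype L] [ProjectivePlane P L] [AddGroup G]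
    [Fintype G] (hG : order P L ≤ Fintype.card G) : Nonempty (Δ.Labeling G) := by
  choose t ht using fun j : Fin 3 => exists_injOn_pencil hG
    (Δ.vertex_mem_side (i := j + 1) (j := j) (by omega))
    (Δ.vertex_mem_side (i := j + 2) (j := j) (by omega)) (Δ.side_ne_side (by omega))
  exact ⟨⟨t, fun j => (ht j).1, fun j => (ht j).2.1, fun j => (ht j).2.2⟩⟩

namespace Labeling

variable {Δ}

section Zero

variable [Zero G] (τ : Δ.Labeling G)

lemma label_side {i j : Fin 3} (h : i ≠ j) : τ.label j (Δ.side i) = 0 := by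
  obtain rfl | rfl : i = j + 1 ∨ i = j + 2 := by omega
  exacts [τ.label_side_add_one j, τ.label_side_add_two j]

lemma label_ne_zero {j : Fin 3} {m : L} (hm : Δ.vertex j ∈ m) (h₁ : m ≠ Δ.side (j + 1))
    (h₂ : m ≠ Δ.side (j + 2)) : τ.label j m ≠ 0 := by
  rw [← τ.label_side_add_one j]
  exact fun h => h₁ (τ.injOn_label j ⟨hm, h₂⟩
    ⟨Δ.vertex_mem_side (by omega), Δ.side_ne_side (by omega)⟩ h)

lemma eq_of_label_eq {j : Fin 3} {m m' : L} (hm : Δ.vertex j ∈ m) (hm' : Δ.vertex j ∈ m')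
    (h : m ≠ Δ.side (j + 2)) (h' : m' ≠ Δ.side (j + 2)) (e : τ.label j m = τ.label j m') :
    m = m' :=
  τ.injOn_label j ⟨hm, h⟩ ⟨hm', h'⟩ e

end Zero

variable [AddCommGroupWithOne G] (τ : Δ.Labeling G)

open Classical in
noncomputable def weight (l : L) (j : Fin 3) : G :=
  (if Δ.vertex j ∈ l then τ.label j l else 0) + (if l = Δ.side (j + 1) then 1 else 0)
    - (if l = Δ.side j then 1 else 0)

variable [Fintype L]

noncomputable def magic : P → Fin 3 → G :=
  pencilSum τ.weight

variable [ProjectivePlane P L]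

open Classical in
lemma magic_apply {x : P} {j : Fin 3} {m : L} (hx : x ≠ Δ.vertex j) (hxm : x ∈ m)
    (hm : Δ.vertex j ∈ m) :
    τ.magic x j = τ.label j m + (if x ∈ Δ.side (j + 1) then 1 else 0)
      - (if x ∈ Δ.side j then 1 else 0) := by
  rw [magic, pencilSum_apply]
  unfold weight
  rw [pencilSum_sub, pencilSum_add, pencilSum_ite_mem _ hx hxm hm, pencilSum_ite_eq,
    pencilSum_ite_eq]

lemma magic_vertex_add_one (k : Fin 3) : τ.magic (Δ.vertex k) (k + 1) = 0 := by
  rw [τ.magic_apply (m := Δ.side (k + 2)) (Δ.vertex_ne_vertex (by omega))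
    (Δ.vertex_mem_side (by omega)) (Δ.vertex_mem_side (by omega)), τ.label_side (by omega),
    if_pos (Δ.vertex_mem_side (by omega)), if_pos (Δ.vertex_mem_side (by omega))]
  simp

lemma magic_vertex_add_two (k : Fin 3) : τ.magic (Δ.vertex k) (k + 2) = -1 := by
  rw [τ.magic_apply (m := Δ.side (k + 1)) (Δ.vertex_ne_vertex (by omega))
    (Δ.vertex_mem_side (by omega)) (Δ.vertex_mem_side (by omega)), τ.label_side (by omega),
    show k + 2 + 1 = k by omega, if_neg (Δ.vertex_notMem_side k),
    if_pos (Δ.vertex_mem_side (by omega))]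
  simp

lemma magic_apply_of_onlyOnSide {x : P} {i : Fin 3} (hx : Δ.OnlyOnSide i x) :
    τ.magic x (i + 1) = 0 ∧ τ.magic x (i + 2) = 1 := by
  obtain ⟨hi, h₁, h₂⟩ := hx
  constructor
  · rw [τ.magic_apply (Δ.ne_vertex_of_notMem_side h₂ (j := i + 1) (by omega)) hi
      (Δ.vertex_mem_side (by omega)), τ.label_side (by omega), show i + 1 + 1 = i + 2 by omega,
      if_neg h₂, if_neg h₁]
    simp
  · rw [τ.magic_apply (Δ.ne_vertex_of_notMem_side h₁ (j := i + 2) (by omega)) hi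
      (Δ.vertex_mem_side (by omega)), τ.label_side (by omega), show i + 2 + 1 = i by omega,
      if_pos hi, if_neg h₂]
    simp

lemma exists_magic_eq_zero_of_mem_side {x : P} (hx : ∃ i, x ∈ Δ.side i) :
    ∃ a, τ.magic x a = 0 ∧ (x = Δ.vertex (a + 2) ∧ τ.magic x (a + 1) = -1 ∨
      Δ.OnlyOnSide (a + 2) x ∧ τ.magic x (a + 1) = 1) := by
  rcases Δ.eq_vertex_or_onlyOnSide hx with ⟨k, rfl⟩ | ⟨i, hi⟩
  · refine ⟨k + 1, τ.magic_vertex_add_one k, .inl ⟨by rw [show k + 1 + 2 = k by omega], ?_⟩⟩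
    rw [show k + 1 + 1 = k + 2 by omega, τ.magic_vertex_add_two]
  · refine ⟨i + 1, (τ.magic_apply_of_onlyOnSide hi).1,
      .inr ⟨by rwa [show i + 1 + 2 = i by omega], ?_⟩⟩
    rw [show i + 1 + 1 = i + 2 by omega, (τ.magic_apply_of_onlyOnSide hi).2]

lemma magic_apply_of_forall_notMem_side {x : P} {j : Fin 3} {m : L} (hx : ∀ i, x ∉ Δ.side i)
    (hxm : x ∈ m) (hm : Δ.vertex j ∈ m) : τ.magic x j = τ.label j m := by
  rw [τ.magic_apply (Δ.ne_vertex_of_notMem_side (hx (j + 1)) (by omega)) hxm hm, if_neg (hx _),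
    if_neg (hx _)]
  simp

lemma magic_ne_zero_of_forall_notMem_side {x : P} (hx : ∀ i, x ∉ Δ.side i) (j : Fin 3) :
    τ.magic x j ≠ 0 := by
  obtain ⟨m, hxm, hm⟩ := (HasLines.existsUnique_line P L x (Δ.vertex j)
    (Δ.ne_vertex_of_notMem_side (hx (j + 1)) (by omega))).exists
  rw [τ.magic_apply_of_forall_notMem_side hx hxm hm]
  exact τ.label_ne_zero hm (fun h => hx _ (h ▸ hxm)) (fun h => hx _ (h ▸ hxm))

lemma magic_ne_of_forall_notMem_side {x y : P} (hx : ∀ i, x ∉ Δ.side i)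
    (hy : ∃ i, y ∈ Δ.side i) : τ.magic x ≠ τ.magic y := by
  obtain ⟨a, ha, -⟩ := τ.exists_magic_eq_zero_of_mem_side hy
  exact fun h => τ.magic_ne_zero_of_forall_notMem_side hx a ((congrFun h a).trans ha)

lemma eq_of_magic_eq_of_forall_notMem_side {x y : P} (hx : ∀ i, x ∉ Δ.side i)
    (hy : ∀ i, y ∉ Δ.side i) (h : τ.magic x = τ.magic y) : x = y := by
  have hline : ∀ j, ∃ m : L, x ∈ m ∧ y ∈ m ∧ Δ.vertex j ∈ m := by
    intro j
    obtain ⟨m, hxm, hm⟩ := (HasLines.existsUnique_line P L x (Δ.vertex j)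
      (Δ.ne_vertex_of_notMem_side (hx (j + 1)) (by omega))).exists
    obtain ⟨m', hym, hm'⟩ := (HasLines.existsUnique_line P L y (Δ.vertex j)
      (Δ.ne_vertex_of_notMem_side (hy (j + 1)) (by omega))).exists
    have hmm' : m = m' := τ.eq_of_label_eq hm hm' (fun e => hx _ (e ▸ hxm))
      (fun e => hy _ (e ▸ hym)) (by rw [← τ.magic_apply_of_forall_notMem_side hx hxm hm,
        ← τ.magic_apply_of_forall_notMem_side hy hym hm', h])
    exact ⟨m, hxm, hmm' ▸ hym, hm⟩
  obtain ⟨m₀, hxm₀, hym₀, hm₀⟩ := hline 0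
  obtain ⟨m₁, hxm₁, hym₁, hm₁⟩ := hline 1
  have hm₀₁ : m₀ ≠ m₁ := by
    rintro rfl
    have hside : m₀ = Δ.side 2 := (Nondegenerate.eq_or_eq hm₀ hm₁ (Δ.vertex_mem_side (by decide))
      (Δ.vertex_mem_side (by decide))).resolve_left (Δ.vertex_ne_vertex (by decide))
    exact hx 2 (hside ▸ hxm₀)
  exact (Nondegenerate.eq_or_eq hxm₀ hym₀ hxm₁ hym₁).resolve_right hm₀₁

lemma eq_of_magic_eq_of_onlyOnSide {x y : P} {i : Fin 3} (hx : Δ.OnlyOnSide i x)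
    (hy : Δ.OnlyOnSide i y) (h : τ.magic x i = τ.magic y i) : x = y := by
  obtain ⟨hxi, hx₁, hx₂⟩ := hx
  obtain ⟨hyi, hy₁, hy₂⟩ := hy
  obtain ⟨m, hxm, hm⟩ :=
    (HasLines.existsUnique_line P L x _ (Δ.ne_vertex_of_mem_side hxi)).exists
  obtain ⟨m', hym, hm'⟩ :=
    (HasLines.existsUnique_line P L y _ (Δ.ne_vertex_of_mem_side hyi)).exists
  rw [τ.magic_apply (Δ.ne_vertex_of_mem_side hxi) hxm hm,
    τ.magic_apply (Δ.ne_vertex_of_mem_side hyi) hym hm', if_neg hx₁, if_pos hxi, if_neg hy₁,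
    if_pos hyi, sub_left_inj, add_left_inj] at h
  obtain rfl := τ.eq_of_label_eq hm hm' (fun e => hx₂ (e ▸ hxm)) (fun e => hy₂ (e ▸ hym)) h
  exact (Nondegenerate.eq_or_eq hxm hym hxi hyi).resolve_right
    (fun e => Δ.ne_vertex_of_mem_side (e ▸ hm) rfl)

lemma eq_of_magic_eq_of_mem_side (h₀ : (1 : G) ≠ 0) (h₁ : (1 : G) ≠ -1) {x y : P}
    (hx : ∃ i, x ∈ Δ.side i) (hy : ∃ i, y ∈ Δ.side i) (h : τ.magic x = τ.magic y) : x = y := by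
  obtain ⟨a, ha, hxa⟩ := τ.exists_magic_eq_zero_of_mem_side hx
  obtain ⟨b, hb, hyb⟩ := τ.exists_magic_eq_zero_of_mem_side hy
  rw [← h] at hb hyb
  have hsucc : ∀ {c : Fin 3}, τ.magic x (c + 1) = -1 ∨ τ.magic x (c + 1) = 1 →
      τ.magic x (c + 1) ≠ 0 := by
    rintro c (e | e) <;> rw [e]
    exacts [neg_ne_zero.2 h₀, h₀]
  obtain rfl : a = b := eq_of_apply_eq_zero_of_apply_add_one_ne_zero ha hb
    (hsucc (hxa.imp (·.2) (·.2))) (hsucc (hyb.imp (·.2) (·.2)))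
  rcases hxa with ⟨rfl, hx₁⟩ | ⟨hx, hx₁⟩ <;> rcases hyb with ⟨rfl, hy₁⟩ | ⟨hy, hy₁⟩
  · rfl
  · exact absurd (hy₁.symm.trans hx₁) h₁
  · exact absurd (hx₁.symm.trans hy₁) h₁
  · exact τ.eq_of_magic_eq_of_onlyOnSide hx hy (congrFun h _)

theorem injective_magic (h₀ : (1 : G) ≠ 0) (h₁ : (1 : G) ≠ -1) : Function.Injective τ.magic := by
  intro x y h
  by_cases hx : ∀ i, x ∉ Δ.side i <;> by_cases hy : ∀ i, y ∉ Δ.side i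
  · exact τ.eq_of_magic_eq_of_forall_notMem_side hx hy h
  · exact absurd h (τ.magic_ne_of_forall_notMem_side hx (by simpa using hy))
  · exact absurd h.symm (τ.magic_ne_of_forall_notMem_side hy (by simpa using hx))
  · exact τ.eq_of_magic_eq_of_mem_side h₀ h₁ (by simpa using hx) (by simpa using hy) h

end Labeling

end Triangle

end MagicLabeling

theorem stmt_11 {P L : Type*} [Membership P L] [Fintype P] [Fintype L]
    [ProjectivePlane P L] {n : ℕ} (hn : ProjectivePlane.order P L = n) (h5 : 5 ≤ n) :
    ∃ v : P → (Fin 3 → ZMod n), Function.Injective v ∧ LineInvariant P L v := by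
  have : Fact (1 < n) := ⟨by omega⟩
  have : Fact (2 < n) := ⟨by omega⟩
  obtain ⟨Δ⟩ := Triangle.nonempty (P := P) (L := L)
  obtain ⟨τ⟩ := Δ.nonempty_labeling (G := ZMod n) (by rw [ZMod.card, hn])
  refine ⟨τ.magic, τ.injective_magic one_ne_zero ZMod.neg_one_ne_one.symm,
    lineInvariant_pencilSum (fun g => ?_) _⟩
  ext j
  simp [hn]
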